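/- In the free associative conformal algebra C(B, N), for any n ≥ 0, any u ∈ T, and any f ∈ C(B, N), the leading word of f_{(n)}[u] is at most \bar{f}^{\D} ♮ u in the weight ordering. -/

import Mathlib

/-!  Basic definitions for (associative) conformal algebras, the free
associative conformal algebra `C(B,N)`, normal words, the weight ordering,
normal `S`-words, compositions and Gröbner–Shirshov bases, following
Ni–Chen, "A new Composition-Diamond lemma for associative conformal algebras". -/

universe u v w

open scoped BigOperators

/-- A conformal algebra over a field `K`. -/
structure ConformalAlgebra (K : Type u) [Field K] (C : Type w)
    [AddCommGroup C] [Module K C] where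
  mul : ℕ → C →ₗ[K] C →ₗ[K] C
  D : C →ₗ[K] C
  locality : ∀ a b : C, ∃ N : ℕ, ∀ n : ℕ, N ≤ n → mul n a b = 0
  leibniz : ∀ (n : ℕ) (a b : C), D (mul n a b) = mul n (D a) b + mul n a (D b)
  D_mul : ∀ (n : ℕ) (a b : C), 0 < n → mul n (D a) b = -((n : K) • mul (n - 1) a b)
  D_mul_zero : ∀ a b : C, mul 0 (D a) b = 0

/-- An associative conformal algebra. -/
structure AssocConformalAlgebra (K : Type u) [Field K] (C : Type w)
    [AddCommGroup C] [Module K C] extends ConformalAlgebra K C where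
  assoc : ∀ (n m : ℕ) (a b c : C),
    mul m (mul n a b) c =
      ∑ t ∈ Finset.range (n + 1),
        ((-1 : K) ^ t * (n.choose t : K)) • mul (n - t) a (mul (m + t) b c)

variable {K : Type u} [Field K] {C : Type w} [AddCommGroup C] [Module K C]

/-- The conjugate sum `{y_(n) x} = Σ_{m≥0} (-1)^{n+m} (1/m!) D^m (f (n+m) y x)`;
a finite sum by locality. -/
noncomputable def conjOp (D : C →ₗ[K] C) (f : ℕ → C → C → C) (n : ℕ) (y x : C) : C :=
  ∑ᶠ m : ℕ, ((-1 : K) ^ (n + m) * ((m.factorial : K))⁻¹) • (D ^ m) (f (n + m) y x)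

/-- The conformal commutator `x_[n] y = x_(n) y − {y_(n) x}`. -/
noncomputable def cBracket (A : AssocConformalAlgebra K C) (n : ℕ) (x y : C) : C :=
  A.mul n x y - conjOp A.D (fun m u v => A.mul m u v) n y x

/-- An associative normal word `b₁_(n₁) ⋯ b_k_(n_k) D^i b_{k+1}`. -/
structure NormalWord (B : Type v) (N : ℕ) where
  body : List (B × Fin N)
  last : B
  exp : ℕ

namespace NormalWord

variable {B : Type v} {N : ℕ}

/-- `u D^i` : raise the final `D`-exponent by `i`. -/
def shiftD (u : NormalWord B N) (i : ℕ) : NormalWord B N := ⟨u.body, u.last, u.exp + i⟩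

/-- Concatenation `a_(n) u` of a `D`-free word `a` with `u`. -/
def concat (u : NormalWord B N) (n : Fin N) (v : NormalWord B N) : NormalWord B N :=
  ⟨u.body ++ (u.last, n) :: v.body, v.last, v.exp⟩

/-- `u^{\D} ♮ v` : drop the final `D`-exponent of `u` and concatenate with `v`,
all junction indices being `N − 1`. -/
def natMul (u v : NormalWord B N) (hN : 0 < N) : NormalWord B N :=
  ⟨u.body ++ (u.last, ⟨N - 1, Nat.sub_lt hN one_pos⟩) ::
      v.body.map (fun p => (p.1, (⟨N - 1, Nat.sub_lt hN one_pos⟩ : Fin N))),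
    v.last, v.exp⟩

end NormalWord

/-- The strict weight ordering on associative normal words: compare lengths,
then the body lexicographically, then the last letter, then the `D`-exponent. -/
def wtLT {B : Type v} {N : ℕ} (r : B → B → Prop) (u v : NormalWord B N) : Prop :=
  u.body.length < v.body.length ∨
    (u.body.length = v.body.length ∧
      (List.Lex (Prod.Lex r (· < ·)) u.body v.body ∨
        (u.body = v.body ∧ (r u.last v.last ∨ (u.last = v.last ∧ u.exp < v.exp)))))

def wtLE {B : Type v} {N : ℕ} (r : B → B → Prop) (u v : NormalWord B N) : Prop :=
  wtLT r u v ∨ u = v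

/-- Words on the alphabet `D^ω(B) = {D^i b}`. -/
inductive CWord (B : Type v) : Type v
  | gen : B → ℕ → CWord B
  | mul : ℕ → CWord B → CWord B → CWord B

/-- Length of a word. -/
def CWord.length {B : Type v} : CWord B → ℕ
  | .gen _ _ => 1
  | .mul _ u v => u.length + v.length

/-- The free associative conformal algebra `C(B,N)` generated by `B` with
uniformly bounded locality `N`, axiomatized by its universal property. -/
structure FreeAssocConformal (K : Type u) [Field K] (B : Type v) (N : ℕ)
    (C : Type w) [AddCommGroup C] [Module K C] where
  alg : AssocConformalAlgebra K C
  ι : B → C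
  loc : ∀ (b b' : B) (n : ℕ), N ≤ n → alg.mul n (ι b) (ι b') = 0
  universal : ∀ (C' : Type w) [AddCommGroup C'] [Module K C']
      (A' : AssocConformalAlgebra K C') (ε : B → C'),
      (∀ (b b' : B) (n : ℕ), N ≤ n → A'.mul n (ε b) (ε b') = 0) →
      ∃! φ : C →ₗ[K] C', (∀ b, φ (ι b) = ε b) ∧
        (∀ (n : ℕ) (x y : C), φ (alg.mul n x y) = A'.mul n (φ x) (φ y)) ∧
        (∀ x : C, φ (alg.D x) = A'.D (φ x))

variable {B : Type v} {N : ℕ}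

/-- Evaluate a `D`-free prefix (a list of letters with indices) applied to `x`,
right-normed. -/
def evalAux (F : FreeAssocConformal K B N C) : List (B × Fin N) → C → C
  | [], x => x
  | p :: rest, x => F.alg.mul (p.2 : ℕ) (F.ι p.1) (evalAux F rest x)

/-- The element of `C(B,N)` given by a normal word (right-normed bracketing). -/
def evalWord (F : FreeAssocConformal K B N C) (u : NormalWord B N) : C :=
  evalAux F u.body ((F.alg.D ^ u.exp) (F.ι u.last))

/-- Evaluate an arbitrary word on `D^ω(B)` in `C(B,N)`. -/
def evalCWord (F : FreeAssocConformal K B N C) : CWord B → C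
  | .gen b i => (F.alg.D ^ i) (F.ι b)
  | .mul n u v => F.alg.mul n (evalCWord F u) (evalCWord F v)

/-- `w` is the leading word `\bar f` of `f` with respect to the normal-word
basis `bas` and the weight ordering induced by `r`. -/
def IsLead (bas : Module.Basis (NormalWord B N) K C) (r : B → B → Prop)
    (f : C) (w : NormalWord B N) : Prop :=
  bas.repr f w ≠ 0 ∧ ∀ w', bas.repr f w' ≠ 0 → w' = w ∨ wtLT r w' w

/-- A set of polynomials is monic if each has leading coefficient `1`. -/
def MonicSet (bas : Module.Basis (NormalWord B N) K C) (r : B → B → Prop) (S : Set C) : Prop :=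
  ∀ s ∈ S, ∃ w, IsLead bas r s w ∧ bas.repr s w = 1

/-- Normal `S`-words together with their (formal) leading words:
either `[a_(n) s_(m) c]` with `a, \bar s` `D`-free, or `[a_(n) D^i s]`
with `a` `D`-free; the prefix `a_(n)` is encoded by the list `p`
(empty list = empty `a`). -/
inductive IsNSWord (F : FreeAssocConformal K B N C)
    (bas : Module.Basis (NormalWord B N) K C) (r : B → B → Prop) (S : Set C) :
    C → NormalWord B N → Prop
  | first (p : List (B × Fin N)) (s : C) (hs : s ∈ S) (sw : NormalWord B N)
      (hlead : IsLead bas r s sw) (hfree : sw.exp = 0) (m : Fin N) (c : NormalWord B N) :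
      IsNSWord F bas r S (evalAux F p (F.alg.mul (m : ℕ) s (evalWord F c)))
        ⟨p ++ sw.body ++ (sw.last, m) :: c.body, c.last, c.exp⟩
  | second (p : List (B × Fin N)) (s : C) (hs : s ∈ S) (sw : NormalWord B N)
      (hlead : IsLead bas r s sw) (i : ℕ) :
      IsNSWord F bas r S (evalAux F p ((F.alg.D ^ i) s)) ⟨p ++ sw.body, sw.last, sw.exp + i⟩

/-- `h` can be written as a linear combination of normal `S`-words whose
(formal leading) words all satisfy `P`. -/
def SRep (F : FreeAssocConformal K B N C) (bas : Module.Basis (NormalWord B N) K C)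
    (r : B → B → Prop) (S : Set C) (h : C) (P : NormalWord B N → Prop) : Prop :=
  ∃ (n : ℕ) (α : Fin n → K) (g : Fin n → C) (wd : Fin n → NormalWord B N),
    h = ∑ i, α i • g i ∧ ∀ i, IsNSWord F bas r S (g i) (wd i) ∧ P (wd i)

/-- `h` is trivial modulo `S`: a linear combination of normal `S`-words with
leading words `≤ \bar h`. -/
def TrivialMod (F : FreeAssocConformal K B N C) (bas : Module.Basis (NormalWord B N) K C)
    (r : B → B → Prop) (S : Set C) (h : C) : Prop :=
  SRep F bas r S h (fun wd => ∀ hw, IsLead bas r h hw → wtLE r wd hw)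

/-- `f` is not `D`-free: some monomial has positive `D`-exponent. -/
def NotDFree (bas : Module.Basis (NormalWord B N) K C) (f : C) : Prop :=
  ∃ w, bas.repr f w ≠ 0 ∧ w.exp ≠ 0

/-- All left multiplication compositions `b_(n) s`, `n ≥ N`, are trivial. -/
def LeftMultClosed (F : FreeAssocConformal K B N C) (bas : Module.Basis (NormalWord B N) K C)
    (r : B → B → Prop) (S : Set C) : Prop :=
  ∀ s ∈ S, ∀ (b : B) (n : ℕ), N ≤ n → TrivialMod F bas r S (F.alg.mul n (F.ι b) s)

/-- All right multiplication compositions `s_(n) b` (for `\bar s` not `D`-free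
and `n < N`, or `s` not `D`-free and `n ≥ N`) are trivial. -/
def RightMultClosed (F : FreeAssocConformal K B N C) (bas : Module.Basis (NormalWord B N) K C)
    (r : B → B → Prop) (S : Set C) : Prop :=
  ∀ s ∈ S, ∀ (b : B) (n : ℕ),
    ((∃ sw, IsLead bas r s sw ∧ sw.exp ≠ 0) ∧ n < N) ∨ (NotDFree bas s ∧ N ≤ n) →
    TrivialMod F bas r S (F.alg.mul n s (F.ι b))

/-- `S` is a Gröbner–Shirshov basis in `C(B,N)`: `S` is monic and all
compositions (inclusion, right inclusion, intersection, right intersection,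
left and right multiplication) are trivial modulo `S`. -/
def IsGSBasis (F : FreeAssocConformal K B N C) (bas : Module.Basis (NormalWord B N) K C)
    (r : B → B → Prop) (S : Set C) : Prop :=
  MonicSet bas r S ∧
  -- inclusion: \bar f = a_(n) \bar g_(m) c
  (∀ f ∈ S, ∀ g ∈ S, ∀ fw gw : NormalWord B N,
    IsLead bas r f fw → IsLead bas r g gw → gw.exp = 0 →
    ∀ (p : List (B × Fin N)) (m : Fin N) (c : NormalWord B N),
      fw = ⟨p ++ sw₁ p gw m c, c.last, c.exp⟩ →
      TrivialMod F bas r S (f - evalAux F p (F.alg.mul (m : ℕ) g (evalWord F c)))) ∧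
  -- right inclusion: \bar f = a_(n) \bar g D^i
  (∀ f ∈ S, ∀ g ∈ S, ∀ fw gw : NormalWord B N,
    IsLead bas r f fw → IsLead bas r g gw →
    ∀ (p : List (B × Fin N)) (i : ℕ),
      fw = ⟨p ++ gw.body, gw.last, gw.exp + i⟩ →
      TrivialMod F bas r S (f - evalAux F p ((F.alg.D ^ i) g))) ∧
  -- intersection: w = \bar f_(m) c = a_(n) \bar g, |\bar f| + |\bar g| > |w|
  (∀ f ∈ S, ∀ g ∈ S, ∀ fw gw : NormalWord B N,
    IsLead bas r f fw → IsLead bas r g gw → fw.exp = 0 →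
    ∀ (p : List (B × Fin N)) (m : Fin N) (c : NormalWord B N),
      fw.body ++ (fw.last, m) :: c.body = p ++ gw.body →
      c.last = gw.last → c.exp = gw.exp →
      p.length < fw.body.length + 1 →
      TrivialMod F bas r S (F.alg.mul (m : ℕ) f (evalWord F c) - evalAux F p g)) ∧
  -- right intersection: w = \bar f D^i = a_(n) \bar g, i > 0
  (∀ f ∈ S, ∀ g ∈ S, ∀ fw gw : NormalWord B N,
    IsLead bas r f fw → IsLead bas r g gw →
    ∀ (p : List (B × Fin N)) (i : ℕ), 0 < i →
      fw.body = p ++ gw.body → fw.last = gw.last → fw.exp + i = gw.exp →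
      TrivialMod F bas r S ((F.alg.D ^ i) f - evalAux F p g)) ∧
  LeftMultClosed F bas r S ∧ RightMultClosed F bas r S
where sw₁ (p : List (B × Fin N)) (gw : NormalWord B N) (m : Fin N) (c : NormalWord B N) :
    List (B × Fin N) := gw.body ++ (gw.last, m) :: c.body

/-- The set of `S`-irreducible normal words. -/
def Irr (F : FreeAssocConformal K B N C) (bas : Module.Basis (NormalWord B N) K C)
    (r : B → B → Prop) (S : Set C) : Set (NormalWord B N) :=
  {w | ¬ ∃ g : C, IsNSWord F bas r S g w}

/-- Membership in the (conformal) ideal generated by `S`. -/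
inductive InIdeal (F : FreeAssocConformal K B N C) (S : Set C) : C → Prop
  | mem {s : C} : s ∈ S → InIdeal F S s
  | zero : InIdeal F S 0
  | add {x y : C} : InIdeal F S x → InIdeal F S y → InIdeal F S (x + y)
  | smul (a : K) {x : C} : InIdeal F S x → InIdeal F S (a • x)
  | deriv {x : C} : InIdeal F S x → InIdeal F S (F.alg.D x)
  | mul_left (n : ℕ) (y : C) {x : C} : InIdeal F S x → InIdeal F S (F.alg.mul n y x)
  | mul_right (n : ℕ) (y : C) {x : C} : InIdeal F S x → InIdeal F S (F.alg.mul n x y)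

/-- The ideal generated by `S`, as a submodule. -/
def idealOf (F : FreeAssocConformal K B N C) (S : Set C) : Submodule K C where
  carrier := {x | InIdeal F S x}
  add_mem' := fun hx hy => InIdeal.add hx hy
  zero_mem' := InIdeal.zero
  smul_mem' := fun a _ hx => InIdeal.smul a hx

/-- `S`-words: words containing exactly one occurrence of some `D^i s`, `s ∈ S`. -/
inductive IsSWord (F : FreeAssocConformal K B N C) (S : Set C) : C → Prop
  | base {s : C} (hs : s ∈ S) (i : ℕ) : IsSWord F S ((F.alg.D ^ i) s)
  | mul_right {u : C} (hu : IsSWord F S u) (v : CWord B) (m : ℕ) :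
      IsSWord F S (F.alg.mul m u (evalCWord F v))
  | mul_left {u : C} (hu : IsSWord F S u) (v : CWord B) (m : ℕ) :
      IsSWord F S (F.alg.mul m (evalCWord F v) u)

/-- A reduced set: every monomial of each `s ∈ S` is `(S∖{s})`-irreducible. -/
def IsReducedSet (F : FreeAssocConformal K B N C) (bas : Module.Basis (NormalWord B N) K C)
    (r : B → B → Prop) (S : Set C) : Prop :=
  ∀ s ∈ S, ∀ w, bas.repr s w ≠ 0 → w ∈ Irr F bas r (S \ {s})

/-! Write `[V]↓` for the span of the basis words `≤ V`; we show `[w]_(n) [u] ∈ [w^{\D} ♮ u]↓` by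
induction on `w`. Associativity `(b_(k) x)_(n) y = Σ_t ± (k choose t) b_(k-t) (x_(n+t) y)` peels off
the first letter of `w` while only lowering its index, and `(D a)_(n) b = -n a_(n-1) b` disposes of
the `D`-power on the last letter. For a single letter, locality `b_(m) c = 0` (`m ≥ N`) turns the
same formula into an expression of `b_(m) (c_(k) y)` through strictly smaller outer indices, so
only indices `< N`, i.e. at most `N - 1`, survive; by the Leibniz rule `D [v] ∈ [v D]↓`. -/

theorem List.Lex.append_of_length_eq {α : Type*} {R : α → α → Prop} :
    ∀ {l₁ l₂ : List α}, l₁.length = l₂.length → List.Lex R l₁ l₂ →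
      ∀ t₁ t₂ : List α, List.Lex R (l₁ ++ t₁) (l₂ ++ t₂)
  | _ :: _, _ :: _, hlen, .cons h, _, _ => .cons (append_of_length_eq (by simpa using hlen) h _ _)
  | _ :: _, _ :: _, _, .rel h, _, _ => .rel h
  | [], _ :: _, hlen, .nil, _, _ => absurd hlen (by simp)

theorem Module.Basis.map_mem_of_forall_support {ι R M M' : Type*} [Semiring R]
    [AddCommMonoid M] [Module R M] [AddCommMonoid M'] [Module R M'] (b : Module.Basis ι R M)
    (φ : M →ₗ[R] M') {P : Submodule R M'} {x : M}
    (h : ∀ i ∈ (b.repr x).support, φ (b i) ∈ P) : φ x ∈ P :=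
  (Submodule.span_le (p := P.comap φ)).mpr (by rintro _ ⟨i, hi, rfl⟩; exact h i hi)
    (b.mem_span_repr_support x)

namespace ConformalAlgebra

variable (A : ConformalAlgebra K C)

theorem mul_D_right (n : ℕ) (a b : C) :
    A.mul n a (A.D b) = A.D (A.mul n a b) - A.mul n (A.D a) b := by
  rw [A.leibniz, add_sub_cancel_left]

theorem mul_D_left_mem {P : Submodule K C} {a b : C} {n : ℕ}
    (h : ∀ m < n, A.mul m a b ∈ P) : A.mul n (A.D a) b ∈ P := by
  cases n with
  | zero => rw [A.D_mul_zero]; exact P.zero_mem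
  | succ n =>
    rw [A.D_mul _ _ _ n.succ_pos]
    exact P.neg_mem (P.smul_mem _ (h n n.lt_succ_self))

theorem mul_Dpow_left_mem {P : Submodule K C} {a b : C} (h : ∀ m, A.mul m a b ∈ P) :
    ∀ e n, A.mul n ((A.D ^ e) a) b ∈ P
  | 0, n => h n
  | e + 1, _ => by
    rw [pow_succ', Module.End.mul_apply]
    exact A.mul_D_left_mem fun m _ => mul_Dpow_left_mem h e m

end ConformalAlgebra

theorem AssocConformalAlgebra.mul_mul_mem_of_locality (A : AssocConformalAlgebra K C)
    {P : Submodule K C} {a b y : C} {N : ℕ} (hloc : ∀ n, N ≤ n → A.mul n a b = 0)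
    (h : ∀ m < N, ∀ k, A.mul m a (A.mul k b y) ∈ P) (m k : ℕ) :
    A.mul m a (A.mul k b y) ∈ P := by
  induction m using Nat.strong_induction_on generalizing k with
  | _ m ih =>
    rcases lt_or_ge m N with hm | hm
    · exact h m hm k
    have hassoc := A.assoc m k a b y
    rw [hloc m hm, map_zero, LinearMap.zero_apply, Finset.sum_range_succ'] at hassoc
    simp only [pow_zero, one_mul, Nat.choose_zero_right, Nat.cast_one, Nat.sub_zero,
      Nat.add_zero, one_smul] at hassoc
    rw [eq_neg_of_add_eq_zero_right hassoc.symm]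
    refine P.neg_mem (P.sum_mem fun t ht => P.smul_mem _ (ih _ ?_ _))
    have := Finset.mem_range.mp ht
    omega

def NormalWord.cons {B : Type v} {N : ℕ} (p : B × Fin N) (v : NormalWord B N) : NormalWord B N :=
  ⟨p :: v.body, v.last, v.exp⟩

section WeightOrder

variable {B : Type v} {N : ℕ} {r : B → B → Prop}

theorem wtLT_iff_lex {u v : NormalWord B N} :
    wtLT r u v ↔ Prod.Lex (· < ·) (Prod.Lex (List.Lex (Prod.Lex r (· < ·))) (Prod.Lex r (· < ·)))
      (u.body.length, u.body, u.last, u.exp) (v.body.length, v.body, v.last, v.exp) := by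
  simp only [wtLT, Prod.lex_def]

theorem wtLT.trans [IsTrans B r] {u v w : NormalWord B N} (huv : wtLT r u v)
    (hvw : wtLT r v w) : wtLT r u w := by
  have : IsTrans (List (B × Fin N)) (List.Lex (Prod.Lex r (· < ·))) :=
    ⟨fun _ _ _ => List.lex_trans fun h h' => _root_.trans h h'⟩
  rw [wtLT_iff_lex] at *
  exact _root_.trans huv hvw

theorem wtLE.trans [IsTrans B r] {u v w : NormalWord B N} (huv : wtLE r u v)
    (hvw : wtLE r v w) : wtLE r u w := by
  rcases huv with huv | rfl
  · rcases hvw with hvw | rfl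
    · exact Or.inl (huv.trans hvw)
    · exact Or.inl huv
  · exact hvw

theorem wtLE.cons {v V : NormalWord B N} (h : wtLE r v V) (p : B × Fin N) :
    wtLE r (v.cons p) (V.cons p) := by
  rcases h with (hlen | ⟨hlen, hlex | ⟨hbody, hrest⟩⟩) | rfl
  · exact Or.inl (Or.inl (Nat.succ_lt_succ hlen))
  · exact Or.inl (Or.inr ⟨congrArg Nat.succ hlen, Or.inl hlex.cons⟩)
  · exact Or.inl (Or.inr ⟨congrArg Nat.succ hlen, Or.inr ⟨congrArg (p :: ·) hbody, hrest⟩⟩)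
  · exact Or.inr rfl

theorem wtLE_cons_of_le (v : NormalWord B N) (b : B) {q q' : Fin N} (hq : q ≤ q') :
    wtLE r (v.cons (b, q)) (v.cons (b, q')) := by
  rcases hq.lt_or_eq with hq | rfl
  · exact Or.inl (Or.inr ⟨rfl, Or.inl (List.Lex.rel (Prod.Lex.right b hq))⟩)
  · exact Or.inr rfl

theorem wtLE_shiftD_self (v : NormalWord B N) (i : ℕ) : wtLE r v (v.shiftD i) := by
  rcases i.eq_zero_or_pos with rfl | hi
  · exact Or.inr rfl
  · exact Or.inl (Or.inr ⟨rfl, Or.inr ⟨rfl, Or.inr ⟨rfl, Nat.lt_add_of_pos_right hi⟩⟩⟩)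

theorem wtLE.shiftD {v V : NormalWord B N} (h : wtLE r v V) (i : ℕ) :
    wtLE r (v.shiftD i) (V.shiftD i) := by
  rcases h with (hlen | ⟨hlen, hlex | ⟨hbody, hlast | ⟨hlast, hexp⟩⟩⟩) | rfl
  · exact Or.inl (Or.inl hlen)
  · exact Or.inl (Or.inr ⟨hlen, Or.inl hlex⟩)
  · exact Or.inl (Or.inr ⟨hlen, Or.inr ⟨hbody, Or.inl hlast⟩⟩)
  · exact Or.inl (Or.inr ⟨hlen, Or.inr ⟨hbody, Or.inr ⟨hlast, Nat.add_lt_add_right hexp i⟩⟩⟩)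
  · exact Or.inr rfl

theorem wtLE.natMul {v V : NormalWord B N} (h : wtLE r v V) (u : NormalWord B N) (hN : 0 < N) :
    wtLE r (v.natMul u hN) (V.natMul u hN) := by
  rcases h with (hlen | ⟨hlen, hlex | ⟨hbody, hlast | ⟨hlast, -⟩⟩⟩) | rfl
  · refine Or.inl (Or.inl ?_)
    simp only [NormalWord.natMul, List.length_append, List.length_cons]
    omega
  · exact Or.inl (Or.inr ⟨by simp [NormalWord.natMul, hlen],
      Or.inl (hlex.append_of_length_eq hlen _ _)⟩)
  · refine Or.inl (Or.inr ⟨by simp [NormalWord.natMul, hbody], Or.inl ?_⟩)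
    simp only [NormalWord.natMul, hbody]
    exact List.Lex.append_left _ (.rel (Prod.Lex.left _ _ hlast)) _
  · exact Or.inr (by simp [NormalWord.natMul, hbody, hlast])
  · exact Or.inr rfl

end WeightOrder

section SpanBelow

variable {B : Type v} {N : ℕ}

def spanBelow (bas : Module.Basis (NormalWord B N) K C) (r : B → B → Prop)
    (V : NormalWord B N) : Submodule K C :=
  Submodule.span K (bas '' {v | wtLE r v V})

variable {bas : Module.Basis (NormalWord B N) K C} {r : B → B → Prop}

theorem mem_spanBelow_iff {V : NormalWord B N} {x : C} :
    x ∈ spanBelow bas r V ↔ ∀ w, bas.repr x w ≠ 0 → wtLE r w V := by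
  simp only [spanBelow, Module.Basis.mem_span_image, Set.subset_def, Finset.mem_coe,
    Finsupp.mem_support_iff, Set.mem_ofPred_eq]

theorem basis_mem_spanBelow {v V : NormalWord B N} (h : wtLE r v V) :
    bas v ∈ spanBelow bas r V :=
  Submodule.subset_span ⟨v, h, rfl⟩

theorem spanBelow_mono [IsTrans B r] {V V' : NormalWord B N} (h : wtLE r V V') :
    spanBelow bas r V ≤ spanBelow bas r V' :=
  Submodule.span_mono (Set.image_mono fun _ hv => wtLE.trans hv h)

theorem IsLead.mem_spanBelow {f : C} {fw : NormalWord B N} (hf : IsLead bas r f fw) :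
    f ∈ spanBelow bas r fw :=
  mem_spanBelow_iff.mpr fun v hv => (hf.2 v hv).elim Or.inr Or.inl

end SpanBelow

namespace FreeAssocConformal

variable {B : Type v} {N : ℕ} (F : FreeAssocConformal K B N C)
  {bas : Module.Basis (NormalWord B N) K C} {r : B → B → Prop}

theorem mul_ι_basis (hbas : ∀ w, bas w = evalWord F w) (q : Fin N) (b : B)
    (v : NormalWord B N) : F.alg.mul q (F.ι b) (bas v) = bas (v.cons (b, q)) := by
  rw [hbas, hbas]
  rfl

theorem mul_ι_mem_spanBelow (hbas : ∀ w, bas w = evalWord F w) (q : Fin N) (b : B)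
    {V : NormalWord B N} {y : C} (hy : y ∈ spanBelow bas r V) :
    F.alg.mul q (F.ι b) y ∈ spanBelow bas r (V.cons (b, q)) := by
  refine bas.map_mem_of_forall_support (F.alg.mul q (F.ι b)) fun v hv => ?_
  rw [F.mul_ι_basis hbas]
  exact basis_mem_spanBelow ((mem_spanBelow_iff.mp hy v (Finsupp.mem_support_iff.mp hv)).cons _)

theorem D_basis_mem_spanBelow [IsTrans B r] (hbas : ∀ w, bas w = evalWord F w)
    (v : NormalWord B N) : F.alg.D (bas v) ∈ spanBelow bas r (v.shiftD 1) := by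
  obtain ⟨l, c, e⟩ := v
  induction l with
  | nil =>
    have hD : F.alg.D (bas ⟨[], c, e⟩) = bas ⟨[], c, e + 1⟩ := by
      rw [hbas, hbas]
      show F.alg.D ((F.alg.D ^ e) (F.ι c)) = (F.alg.D ^ (e + 1)) (F.ι c)
      rw [pow_succ', Module.End.mul_apply]
    rw [hD]
    exact basis_mem_spanBelow (Or.inr rfl)
  | cons p t ih =>
    obtain ⟨b, k⟩ := p
    set v : NormalWord B N := ⟨t, c, e⟩
    change F.alg.D (bas (v.cons (b, k))) ∈ spanBelow bas r ((v.shiftD 1).cons (b, k))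
    rw [← F.mul_ι_basis hbas, F.alg.leibniz]
    refine Submodule.add_mem _ (F.alg.mul_D_left_mem fun m hm => ?_)
      (F.mul_ι_mem_spanBelow hbas k b ih)
    have hmN : m < N := hm.trans k.isLt
    have hle : wtLE r ((v.shiftD 1).cons (b, ⟨m, hmN⟩)) ((v.shiftD 1).cons (b, k)) :=
      wtLE_cons_of_le _ b hm.le
    exact spanBelow_mono hle
      (F.mul_ι_mem_spanBelow hbas ⟨m, hmN⟩ b (basis_mem_spanBelow (wtLE_shiftD_self v 1)))

theorem D_mem_spanBelow [IsTrans B r] (hbas : ∀ w, bas w = evalWord F w) {V : NormalWord B N}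
    {x : C} (hx : x ∈ spanBelow bas r V) : F.alg.D x ∈ spanBelow bas r (V.shiftD 1) :=
  bas.map_mem_of_forall_support F.alg.D fun v hv =>
    spanBelow_mono ((mem_spanBelow_iff.mp hx v (Finsupp.mem_support_iff.mp hv)).shiftD 1)
      (F.D_basis_mem_spanBelow hbas v)

theorem mul_ι_Dpow_ι_mem_spanBelow [IsTrans B r] (hbas : ∀ w, bas w = evalWord F w)
    (hN : 0 < N) (b c : B) (j m : ℕ) :
    F.alg.mul m (F.ι b) ((F.alg.D ^ j) (F.ι c)) ∈
      spanBelow bas r ((⟨[], c, j⟩ : NormalWord B N).cons (b, ⟨N - 1, Nat.sub_lt hN one_pos⟩)) := by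
  induction j generalizing m with
  | zero =>
    rcases lt_or_ge m N with hm | hm
    · rw [show (F.alg.D ^ 0) (F.ι c) = bas ⟨[], c, 0⟩ from (hbas ⟨[], c, 0⟩).symm]
      exact spanBelow_mono (wtLE_cons_of_le _ b (Fin.mk_le_mk.mpr (by omega)))
        (F.mul_ι_mem_spanBelow hbas ⟨m, hm⟩ b (basis_mem_spanBelow (Or.inr rfl)))
    · rw [pow_zero, Module.End.one_apply, F.loc b c m hm]
      exact Submodule.zero_mem _
  | succ j ih =>
    change _ ∈ spanBelow bas r
      (((⟨[], c, j⟩ : NormalWord B N).cons (b, ⟨N - 1, Nat.sub_lt hN one_pos⟩)).shiftD 1)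
    rw [pow_succ', Module.End.mul_apply, F.alg.mul_D_right]
    exact Submodule.sub_mem _ (F.D_mem_spanBelow hbas (ih m))
      (F.alg.mul_D_left_mem fun m' _ => spanBelow_mono (wtLE_shiftD_self _ 1) (ih m'))

theorem mul_ι_basis_mem_spanBelow [IsTrans B r] (hbas : ∀ w, bas w = evalWord F w)
    (hN : 0 < N) (u : NormalWord B N) (b : B) (m : ℕ) :
    F.alg.mul m (F.ι b) (bas u) ∈ spanBelow bas r ((⟨[], b, 0⟩ : NormalWord B N).natMul u hN) := by
  obtain ⟨l, c, e⟩ := u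
  induction l generalizing b m with
  | nil =>
    rw [hbas]
    exact F.mul_ι_Dpow_ι_mem_spanBelow hbas hN b c e m
  | cons p t ih =>
    obtain ⟨c', k⟩ := p
    set v : NormalWord B N := ⟨t, c, e⟩
    change F.alg.mul m (F.ι b) (bas (v.cons (c', k))) ∈ spanBelow bas r
      (((⟨[], c', 0⟩ : NormalWord B N).natMul v hN).cons (b, ⟨N - 1, Nat.sub_lt hN one_pos⟩))
    rw [← F.mul_ι_basis hbas]
    refine F.alg.mul_mul_mem_of_locality (F.loc b c') (fun m' hm' k' => ?_) m k
    exact spanBelow_mono (wtLE_cons_of_le _ b (Fin.mk_le_mk.mpr (by omega)))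
      (F.mul_ι_mem_spanBelow hbas ⟨m', hm'⟩ b (ih c' k'))

theorem mul_basis_basis_mem_spanBelow [IsTrans B r] (hbas : ∀ w, bas w = evalWord F w)
    (hN : 0 < N) (v u : NormalWord B N) (n : ℕ) :
    F.alg.mul n (bas v) (bas u) ∈ spanBelow bas r (v.natMul u hN) := by
  obtain ⟨l, c, e⟩ := v
  induction l generalizing n with
  | nil =>
    rw [hbas ⟨[], c, e⟩]
    exact F.alg.mul_Dpow_left_mem (fun m => F.mul_ι_basis_mem_spanBelow hbas hN u c m) e n
  | cons p t ih =>
    obtain ⟨b, k⟩ := p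
    set v : NormalWord B N := ⟨t, c, e⟩
    change F.alg.mul n (bas (v.cons (b, k))) (bas u) ∈
      spanBelow bas r ((v.natMul u hN).cons (b, k))
    rw [← F.mul_ι_basis hbas, F.alg.assoc]
    refine Submodule.sum_mem _ fun i _ => Submodule.smul_mem _ _ ?_
    have hi : (k : ℕ) - i < N := (Nat.sub_le _ _).trans_lt k.isLt
    exact spanBelow_mono (wtLE_cons_of_le _ b (Fin.mk_le_mk.mpr (Nat.sub_le _ _)))
      (F.mul_ι_mem_spanBelow hbas ⟨k - i, hi⟩ b (ih (n + i)))

theorem mul_basis_mem_spanBelow [IsTrans B r] (hbas : ∀ w, bas w = evalWord F w)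
    (hN : 0 < N) {f : C} {fw : NormalWord B N} (hf : f ∈ spanBelow bas r fw)
    (u : NormalWord B N) (n : ℕ) :
    F.alg.mul n f (bas u) ∈ spanBelow bas r (fw.natMul u hN) :=
  bas.map_mem_of_forall_support ((F.alg.mul n).flip (bas u)) fun v hv =>
    spanBelow_mono ((mem_spanBelow_iff.mp hf v (Finsupp.mem_support_iff.mp hv)).natMul u hN)
      (F.mul_basis_basis_mem_spanBelow hbas hN v u n)

end FreeAssocConformal

theorem lead_poly_mul_le_natMul_general {K : Type u} [Field K]
    {B : Type v} {N : ℕ} {C : Type w} [AddCommGroup C] [Module K C]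
    (F : FreeAssocConformal K B N C) (bas : Module.Basis (NormalWord B N) K C)
    (hbas : ∀ w, bas w = evalWord F w)
    (r : B → B → Prop) (hr : IsWellOrder B r) (hN : 0 < N)
    (f : C) (fw : NormalWord B N) (hf : IsLead bas r f fw)
    (u : NormalWord B N) (n : ℕ) (w : NormalWord B N)
    (hw : IsLead bas r (F.alg.mul n f (evalWord F u)) w) :
    wtLE r w (fw.natMul u hN) := by
  have := hr
  have hmem := F.mul_basis_mem_spanBelow hbas hN hf.mem_spanBelow u n
  rw [hbas] at hmem
  exact mem_spanBelow_iff.mp hmem w hw.1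

theorem lead_poly_mul_le_natMul {K : Type u} [Field K] [CharZero K]
    {B : Type v} {N : ℕ} {C : Type w} [AddCommGroup C] [Module K C]
    (F : FreeAssocConformal K B N C) (bas : Module.Basis (NormalWord B N) K C)
    (hbas : ∀ w, bas w = evalWord F w)
    (r : B → B → Prop) (hr : IsWellOrder B r) (hN : 0 < N)
    (f : C) (fw : NormalWord B N) (hf : IsLead bas r f fw)
    (u : NormalWord B N) (n : ℕ) (w : NormalWord B N)
    (hw : IsLead bas r (F.alg.mul n f (evalWord F u)) w) :
    wtLE r w (fw.natMul u hN) :=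
  lead_poly_mul_le_natMul_general F bas hbas r hr hN f fw hf u n w hw
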